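/- arXiv:1911.01534 — 5 statements merged into one kernel-verified Lean document; each statement's English description precedes it below -/
import Mathlib

section
/- Let n ≥ 1, let a₁, a₂, …, aₙ be distinct positive integers, and let M be a set of n−1 positive integers not containing s = a₁ + a₂ + ⋯ + aₙ. Then there exists a permutation σ of {1, …, n} such that for every l with 1 ≤ l ≤ n, the partial sum a_{σ(1)} + a_{σ(2)} + ⋯ + a_{σ(l)} does not belong to M. -/
/-!
Induction on the number of jumps, for any set of fewer mines than jumps avoiding the total `s`.
Remove the largest jump `d` and let `T = s - d` be the sum of the others.
* If every mine is `≤ T`, let `m` be the largest mine: order the other jumps avoiding all mines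
  but `m`, and insert `d` just before the partial sums reach `m`; from then on they exceed `m`.
* If some mine exceeds `T` and `T` is safe, order the other jumps avoiding the mines below `T`
  (at most `|M| - 1` of them) and jump `d` last.
* If `T` is a mine, the maps `c ↦ T - c` and `c ↦ T + d - c` send the jumps `c < d` to disjoint
  ranges around `T`, so some `c` makes both `T - c` and `T + d - c` safe. Order the jumps other
  than `c` and `d` avoiding the mines below `T - c` (which exclude `T` and a mine above `T`),
  then jump `d`, then `c`.
-/

def PrefixSumsAvoid (M : Finset ℤ) (l : List ℤ) : Prop :=
  ∀ k, 0 < k → (l.take k).sum ∉ M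

namespace PrefixSumsAvoid

variable {M : Finset ℤ} {l : List ℤ}

theorem append_singleton {d : ℤ} (h : PrefixSumsAvoid M l) (hd : l.sum + d ∉ M) :
    PrefixSumsAvoid M (l ++ [d]) := by
  intro k hk
  rcases le_or_gt k l.length with hkl | hkl
  · rw [List.take_append_of_le_length hkl]
    exact h k hk
  · rw [List.take_of_length_le (by simp; omega), List.sum_append, List.sum_singleton]
    exact hd

theorem of_filter_lt (hl : ∀ x ∈ l, 0 ≤ x) (h : PrefixSumsAvoid (M.filter (· < l.sum)) l)
    (hs : l.sum ∉ M) : PrefixSumsAvoid M l := by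
  intro k hk hkM
  have hle : (l.take k).sum ≤ l.sum := (List.take_sublist k l).sum_le_sum hl
  have hne : (l.take k).sum ≠ l.sum := fun heq => hs (heq ▸ hkM)
  exact h k hk (Finset.mem_filter.2 ⟨hkM, lt_of_le_of_ne hle hne⟩)

/-- Insert `d` just before the first partial sum that reaches `m`: the earlier partial sums stay
below `m`, and since every jump of `l` is `< d`, the later ones exceed that first one. -/
theorem exists_perm_cons {m d : ℤ} (hl₀ : ∀ x ∈ l, 0 ≤ x) (hld : ∀ x ∈ l, x < d) (hd : 0 < d)
    (hM : ∀ x ∈ M, x ≤ m) (hm : m ≤ l.sum) (h : PrefixSumsAvoid (M.erase m) l) :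
    ∃ l' : List ℤ, l'.Perm (d :: l) ∧ PrefixSumsAvoid M l' := by
  have hex : ∃ j, m ≤ (l.take (j + 1)).sum := ⟨l.length, by rwa [List.take_of_length_le (by omega)]⟩
  classical
  set j := Nat.find hex
  have hjl : j ≤ l.length := Nat.find_min' hex (by rwa [List.take_of_length_le (by omega)])
  have hbelow : ∀ k, k ≤ j → 0 < k → (l.take k).sum < m := by
    intro k hkj hk
    obtain ⟨i, rfl⟩ : ∃ i, k = i + 1 := ⟨k - 1, by omega⟩
    exact not_le.1 (Nat.find_min hex (by omega))
  have hstep : (l.take (j + 1)).sum < (l.take j).sum + d := by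
    rw [List.take_add_one, List.sum_append]
    cases hx : l[j]? with
    | none => simpa using hd
    | some x => simpa using hld x (List.mem_of_getElem? hx)
  refine ⟨l.take j ++ d :: l.drop j, ?_, ?_⟩
  · simpa only [List.take_append_drop] using (List.perm_middle (l₁ := l.take j) (l₂ := l.drop j))
  intro k hk hkM
  rcases le_or_gt k j with hkj | hkj
  · rw [List.take_append_of_le_length (by simp; omega), List.take_take,
      min_eq_left hkj] at hkM
    exact h k hk (Finset.mem_erase.2 ⟨(hbelow k hkj hk).ne, hkM⟩)
  · obtain ⟨i, rfl⟩ : ∃ i, k = j + (i + 1) := ⟨k - j - 1, by omega⟩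
    have hrest : 0 ≤ ((l.drop j).take i).sum :=
      List.sum_nonneg fun x hx => hl₀ x (List.mem_of_mem_drop (List.mem_of_mem_take hx))
    rw [List.take_append, List.take_of_length_le (by simp), List.length_take,
      min_eq_left hjl, Nat.add_sub_cancel_left, List.take_succ_cons] at hkM
    have := hM _ hkM
    simp only [List.sum_append, List.sum_cons] at this
    have hreach : m ≤ (l.take (j + 1)).sum := Nat.find_spec hex
    omega

end PrefixSumsAvoid

theorem exists_sub_notMem_and_add_sub_notMem {B M : Finset ℤ} {t d : ℤ}
    (hB : ∀ c ∈ B, 0 < c ∧ c < d) (ht : t ∈ M) (hcard : M.card ≤ B.card) :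
    ∃ c ∈ B, t - c ∉ M ∧ t + d - c ∉ M := by
  by_contra! hbad
  classical
  have hinj : Set.InjOn (fun c => if t - c ∈ M then t - c else t + d - c) B := by
    intro x hx y hy hxy
    have := hB x hx
    have := hB y hy
    simp only at hxy
    split_ifs at hxy <;> omega
  have hmaps : Set.MapsTo (fun c => if t - c ∈ M then t - c else t + d - c) B (M.erase t) := by
    intro c hc
    have := hB c hc
    simp only [Finset.mem_coe, Finset.mem_erase]
    split_ifs with h
    · exact ⟨by omega, h⟩
    · exact ⟨by omega, hbad c hc h⟩
  have := Finset.card_le_card_of_injOn _ hmaps hinj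
  rw [Finset.card_erase_of_mem ht] at this
  have := M.card_pos.2 ⟨t, ht⟩
  omega

theorem List.Perm.cons_perm_toList_insert {α : Type*} [DecidableEq α] {B : Finset α} {d : α}
    {l : List α} (hl : l.Perm B.toList) (hd : d ∉ B) : (d :: l).Perm (insert d B).toList :=
  (hl.cons d).trans (Finset.toList_insert hd).symm

def HasAvoidingOrder (A M : Finset ℤ) : Prop :=
  ∃ l : List ℤ, l.Perm A.toList ∧ PrefixSumsAvoid M l

namespace HasAvoidingOrder

variable {B M : Finset ℤ} {d : ℤ}

theorem insert_of_sum_notMem (hB : ∀ x ∈ B, 0 < x ∧ x < d)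
    (ih : ∀ M : Finset ℤ, M.card < B.card → ∑ x ∈ B, x ∉ M → HasAvoidingOrder B M)
    {m₀ : ℤ} (hm₀ : m₀ ∈ M) (hTm₀ : ∑ x ∈ B, x < m₀) (hcard : M.card ≤ B.card)
    (hT : ∑ x ∈ B, x ∉ M) (hs : ∑ x ∈ B, x + d ∉ M) :
    HasAvoidingOrder (insert d B) M := by
  have hdB : d ∉ B := fun h => lt_irrefl d (hB d h).2
  have hsub : M.filter (· < ∑ x ∈ B, x) ⊆ M.erase m₀ := fun x hx => by
    simp only [Finset.mem_filter] at hx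
    exact Finset.mem_erase.2 ⟨by omega, hx.1⟩
  have := Finset.card_le_card hsub
  have := Finset.card_erase_lt_of_mem hm₀
  obtain ⟨l, hlB, hl⟩ := ih (M.filter (· < ∑ x ∈ B, x)) (by omega) (by simp)
  have hlsum : l.sum = ∑ x ∈ B, x := hlB.sum_eq.trans B.sum_toList
  refine ⟨l ++ [d], (List.perm_append_singleton d l).trans (hlB.cons_perm_toList_insert hdB), ?_⟩
  rw [← hlsum] at hl hT hs
  exact (hl.of_filter_lt (fun x hx => (hB x (Finset.mem_toList.1 (hlB.subset hx))).1.le)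
    hT).append_singleton hs

theorem insert_of_sum_mem (hB : ∀ x ∈ B, 0 < x ∧ x < d)
    (ih : ∀ C ⊆ B, ∀ M : Finset ℤ, M.card < C.card → ∑ x ∈ C, x ∉ M → HasAvoidingOrder C M)
    {m₀ : ℤ} (hm₀ : m₀ ∈ M) (hTm₀ : ∑ x ∈ B, x < m₀) (hcard : M.card ≤ B.card)
    (hT : ∑ x ∈ B, x ∈ M) (hs : ∑ x ∈ B, x + d ∉ M) :
    HasAvoidingOrder (insert d B) M := by
  have hdB : d ∉ B := fun h => lt_irrefl d (hB d h).2
  obtain ⟨c, hcB, hc₁, hc₂⟩ := exists_sub_notMem_and_add_sub_notMem hB hT hcard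
  have hsub : M.filter (· < ∑ x ∈ B, x - c) ⊆ (M.erase m₀).erase (∑ x ∈ B, x) := fun x hx => by
    have := (hB c hcB).1
    simp only [Finset.mem_filter] at hx
    exact Finset.mem_erase.2 ⟨by omega, Finset.mem_erase.2 ⟨by omega, hx.1⟩⟩
  have := Finset.card_le_card hsub
  have := Finset.card_erase_lt_of_mem hm₀
  have := Finset.card_erase_lt_of_mem (Finset.mem_erase.2 ⟨hTm₀.ne, hT⟩)
  have := Finset.card_erase_of_mem hcB
  have hCsum : ∑ x ∈ B.erase c, x = ∑ x ∈ B, x - c :=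
    eq_sub_of_add_eq (Finset.sum_erase_add B _ hcB)
  have hlast : ∑ x ∈ B, x - c + d + c = ∑ x ∈ B, x + d := by ring
  obtain ⟨l, hlC, hl⟩ := ih (B.erase c) (Finset.erase_subset c B) (M.filter (· < ∑ x ∈ B, x - c))
    (by omega) (by simp [hCsum])
  have hlsum : l.sum = ∑ x ∈ B, x - c := (hlC.sum_eq.trans (B.erase c).sum_toList).trans hCsum
  refine ⟨l ++ [d] ++ [c], ?_, ?_⟩
  · have hperm : (l ++ [d] ++ [c]).Perm (d :: c :: l) := by
      simpa using List.perm_append_comm (l₁ := l) (l₂ := [d, c])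
    have hcl : (c :: l).Perm B.toList := by
      simpa only [Finset.insert_erase hcB] using hlC.cons_perm_toList_insert (B.notMem_erase c)
    exact hperm.trans (hcl.cons_perm_toList_insert hdB)
  · rw [← hlsum] at hl
    refine ((hl.of_filter_lt (fun x hx => ?_) (hlsum ▸ hc₁)).append_singleton ?_).append_singleton ?_
    · exact (hB x (Finset.mem_of_mem_erase (Finset.mem_toList.1 (hlC.subset hx)))).1.le
    · rwa [hlsum, sub_add_eq_add_sub]
    · rwa [List.sum_append, List.sum_singleton, hlsum, hlast]

theorem insert_of_forall_le_sum (hB : ∀ x ∈ B, 0 < x ∧ x < d) (hd : 0 < d)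
    (ih : ∀ M : Finset ℤ, M.card < B.card → ∑ x ∈ B, x ∉ M → HasAvoidingOrder B M)
    (hM : M.Nonempty) (hle : ∀ m ∈ M, m ≤ ∑ x ∈ B, x) (hcard : M.card ≤ B.card) :
    HasAvoidingOrder (insert d B) M := by
  have hdB : d ∉ B := fun h => lt_irrefl d (hB d h).2
  have hmax := M.max'_mem hM
  have := Finset.card_erase_lt_of_mem hmax
  obtain ⟨l, hlB, hl⟩ := ih (M.erase (M.max' hM)) (by omega) fun h =>
    (Finset.mem_erase.1 h).1 (le_antisymm (M.le_max' _ (Finset.mem_of_mem_erase h)) (hle _ hmax))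
  have hlB' : ∀ x ∈ l, 0 < x ∧ x < d := fun x hx => hB x (Finset.mem_toList.1 (hlB.subset hx))
  obtain ⟨l', hl', hl'M⟩ := hl.exists_perm_cons (fun x hx => (hlB' x hx).1.le)
    (fun x hx => (hlB' x hx).2) hd (fun x hx => M.le_max' x hx)
    (hlB.sum_eq.trans B.sum_toList ▸ hle _ hmax)
  exact ⟨l', hl'.trans (hlB.cons_perm_toList_insert hdB), hl'M⟩

end HasAvoidingOrder

theorem hasAvoidingOrder_of_card_lt (A M : Finset ℤ) (hA : ∀ x ∈ A, 0 < x)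
    (hM : M.card < A.card) (hs : ∑ x ∈ A, x ∉ M) : HasAvoidingOrder A M := by
  induction A using Finset.strongInduction generalizing M with
  | H A ih =>
  rcases M.eq_empty_or_nonempty with rfl | hM₀
  · exact ⟨A.toList, .refl _, fun _ _ => Finset.notMem_empty _⟩
  have hA₀ : A.Nonempty := Finset.card_pos.1 (by omega)
  set d := A.max' hA₀
  have hdA : d ∈ A := A.max'_mem hA₀
  set B := A.erase d
  have hB : ∀ x ∈ B, 0 < x ∧ x < d := fun x hx =>
    ⟨hA x (Finset.mem_of_mem_erase hx),
      lt_of_le_of_ne (A.le_max' x (Finset.mem_of_mem_erase hx)) (Finset.ne_of_mem_erase hx)⟩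
  have hBcard : B.card = A.card - 1 := Finset.card_erase_of_mem hdA
  have hs' : ∑ x ∈ B, x + d ∉ M := by rwa [Finset.sum_erase_add A _ hdA]
  have ihB : ∀ C ⊆ B, ∀ M : Finset ℤ, M.card < C.card → ∑ x ∈ C, x ∉ M → HasAvoidingOrder C M :=
    fun C hCB M => ih C (hCB.trans_ssubset (Finset.erase_ssubset hdA)) M
      (fun x hx => (hB x (hCB hx)).1)
  have hcard : M.card ≤ B.card := by omega
  suffices HasAvoidingOrder (insert d B) M by rwa [Finset.insert_erase hdA] at this
  by_cases hle : ∀ m ∈ M, m ≤ ∑ x ∈ B, x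
  · exact .insert_of_forall_le_sum hB (hA d hdA) (ihB B subset_rfl) hM₀ hle hcard
  push Not at hle
  obtain ⟨m₀, hm₀, hTm₀⟩ := hle
  by_cases hT : ∑ x ∈ B, x ∈ M
  · exact .insert_of_sum_mem hB ihB hm₀ hTm₀ hcard hT hs'
  · exact .insert_of_sum_notMem hB (ihB B subset_rfl) hm₀ hTm₀ hcard hT hs'

theorem List.exists_ofFn_comp_perm_eq {α : Type*} {n : ℕ} {f : Fin n → α}
    (hf : Function.Injective f) {l : List α} (hl : l.Perm (List.ofFn f)) :
    ∃ σ : Equiv.Perm (Fin n), List.ofFn (f ∘ σ) = l := by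
  have hlen : l.length = n := by simpa using hl.length_eq
  have hmem : ∀ k : Fin n, ∃ i, f i = l[k.1] := fun k =>
    List.mem_ofFn.1 (hl.subset (List.getElem_mem _))
  choose σ hσ using hmem
  have hσinj : Function.Injective σ := by
    intro x y hxy
    have := (hl.nodup_iff.2 (List.nodup_ofFn.2 hf)).getElem_inj_iff.1
      ((hσ x).symm.trans (hxy ▸ hσ y))
    exact Fin.ext this
  refine ⟨Equiv.ofBijective σ (Finite.injective_iff_bijective.1 hσinj), ?_⟩
  apply List.ext_getElem (by simp [hlen])
  intro i _ _
  simp [hσ]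

theorem grasshopper_int_general (n : ℕ) (hn : 1 ≤ n) (a : Fin n → ℤ)
    (ha_pos : ∀ i, 0 < a i) (ha_inj : Function.Injective a)
    (M : Finset ℤ) (hM_card : M.card = n - 1)
    (hs : (∑ i, a i) ∉ M) :
    ∃ σ : Equiv.Perm (Fin n), ∀ l : ℕ, 1 ≤ l → l ≤ n →
      (∑ k ∈ Finset.univ.filter (fun k : Fin n => (k : ℕ) < l), a (σ k)) ∉ M := by
  have hnd : (List.ofFn a).Nodup := List.nodup_ofFn.2 ha_inj
  set A := (List.ofFn a).toFinset
  have hAperm : A.toList.Perm (List.ofFn a) := List.toFinset_toList hnd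
  have hApos : ∀ x ∈ A, 0 < x := fun x hx => by
    obtain ⟨i, rfl⟩ := List.mem_ofFn.1 (List.mem_toFinset.1 hx)
    exact ha_pos i
  have hAcard : A.card = n := by rw [List.toFinset_card_of_nodup hnd, List.length_ofFn]
  have hAsum : ∑ x ∈ A, x = ∑ i, a i := by rw [← A.sum_toList, hAperm.sum_eq, List.sum_ofFn]
  obtain ⟨l, hlA, hl⟩ := hasAvoidingOrder_of_card_lt A M hApos (by omega) (hAsum ▸ hs)
  obtain ⟨σ, hσ⟩ := List.exists_ofFn_comp_perm_eq ha_inj (hlA.trans hAperm)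
  refine ⟨σ, fun k hk _ => ?_⟩
  have := List.sum_take_ofFn (a ∘ σ) k
  rw [hσ] at this
  exact this ▸ hl k hk

/-- The grasshopper problem (IMO 2009, Problem 6): for distinct positive
integers `a 0, …, a (n-1)` and a set `M` of `n - 1` positive integers not
containing `s = ∑ i, a i`, there is an order of the jumps such that no
partial sum lands in `M`. -/
theorem grasshopper_int (n : ℕ) (hn : 1 ≤ n) (a : Fin n → ℤ)
    (ha_pos : ∀ i, 0 < a i) (ha_inj : Function.Injective a)
    (M : Finset ℤ) (hM_card : M.card = n - 1) (hM_pos : ∀ m ∈ M, 0 < m)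
    (hs : (∑ i, a i) ∉ M) :
    ∃ σ : Equiv.Perm (Fin n), ∀ l : ℕ, 1 ≤ l → l ≤ n →
      (∑ k ∈ Finset.univ.filter (fun k : Fin n => (k : ℕ) < l), a (σ k)) ∉ M :=
  grasshopper_int_general n hn a ha_pos ha_inj M hM_card hs
end

section
/- Let n ≥ 1, let a₁, a₂, …, aₙ be distinct positive real numbers, and let M be a set of n−1 positive real numbers not containing s = a₁ + a₂ + ⋯ + aₙ. Then there exists a permutation σ of {1, …, n} such that for every l with 1 ≤ l ≤ n, the partial sum a_{σ(1)} + a_{σ(2)} + ⋯ + a_{σ(l)} does not belong to M. -/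
/-!
Induction on the number of jumps. Let `d` be the largest jump and `R` the sum of the others; an
order of the other jumps avoiding a suitable set of fewer mines is found by induction, and `d` is
inserted into it.

If `R ∉ M`, forget the largest mine `μ`. If the order lands on `μ`, make the jump `d` just
before that landing: since `d` exceeds the jump it precedes, every later point lies beyond `μ`.
Otherwise put `d` last.

If `R ∈ M`, forget `R` and pull every mine above `R` down by `d`. Then put `d` just before the
last jump `c`: the earlier points are below `R`, so they avoid `M`, and `R - c + d` is not a mine
because `R - c` is not a pulled-down one.
-/

open Finset

namespace List

variable {α : Type*}

theorem strictMonoOn_sum_take [AddMonoid α] [Preorder α] [AddLeftStrictMono α] {l : List α}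
    (hl : ∀ x ∈ l, 0 < x) : StrictMonoOn (fun k => (l.take k).sum) (Set.Iic l.length) :=
  strictMonoOn_Iic_of_lt_succ fun k hk => by
    rw [Order.succ_eq_add_one, sum_take_succ _ _ hk]
    exact lt_add_of_pos_right _ (hl _ (getElem_mem hk))

theorem sum_take_succ_insertIdx [AddCommMonoid α] (d : α) {l : List α} {k j : ℕ}
    (hk : k ≤ l.length) (hkj : k ≤ j) :
    ((l.insertIdx k d).take (j + 1)).sum = (l.take j).sum + d := by
  induction k generalizing l j with
  | zero => simp [add_comm]
  | succ k ih =>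
    obtain ⟨x, l, rfl⟩ := exists_cons_of_length_pos (by omega : 0 < l.length)
    obtain ⟨j, rfl⟩ : ∃ j', j = j' + 1 := ⟨j - 1, by omega⟩
    rw [insertIdx_succ_cons, take_succ_cons, sum_cons, ih (by simpa using hk) (by omega),
      take_succ_cons, sum_cons, add_assoc]

theorem Perm.exists_ofFn_comp_eq {n : ℕ} {f : Fin n → α} (hf : Function.Injective f)
    {l : List α} (h : l ~ ofFn f) : ∃ σ : Equiv.Perm (Fin n), ofFn (f ∘ σ) = l := by
  have hlen : l.length = n := by simpa using h.length_eq
  have hmem (i : Fin n) : ∃ j, f j = l[(i : ℕ)] := mem_ofFn.mp (h.subset (getElem_mem _))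
  choose g hg using hmem
  have hg_inj : Function.Injective g := fun i j hij =>
    Fin.ext <| (h.nodup_iff.mpr (nodup_ofFn.mpr hf)).getElem_inj_iff.mp
      (by rw [← hg i, ← hg j, hij])
  exact ⟨Equiv.ofBijective g hg_inj.bijective_of_finite,
    ext_getElem (by simp [hlen]) fun i _ _ => by simp [hg]⟩

end List

def PartialSumsAvoid {α : Type*} [AddMonoid α] (M : Finset α) (l : List α) : Prop :=
  ∀ k, 1 ≤ k → k ≤ l.length → (l.take k).sum ∉ M

theorem partialSumsAvoid_insertIdx {α : Type*} [AddCommMonoid α] {M : Finset α} {l : List α}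
    {d : α} {k : ℕ} (hk : k ≤ l.length)
    (hlow : ∀ i, 1 ≤ i → i ≤ k → (l.take i).sum ∉ M)
    (hhigh : ∀ i, k ≤ i → i ≤ l.length → (l.take i).sum + d ∉ M) :
    PartialSumsAvoid M (l.insertIdx k d) := by
  intro j hj1 hj
  rw [List.length_insertIdx_of_le_length hk] at hj
  rcases le_or_gt j k with hjk | hkj
  · rw [List.take_insertIdx_eq_take_of_le _ _ _ _ hjk]
    exact hlow j hj1 hjk
  · obtain ⟨i, rfl⟩ := Nat.exists_eq_add_of_lt hkj
    rw [List.sum_take_succ_insertIdx d hk (by omega)]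
    exact hhigh _ (by omega) (by omega)

section InsertLargestJump

variable {l : List ℝ} {d : ℝ} {M : Finset ℝ}

theorem exists_insertIdx_partialSumsAvoid_of_erase_max (hpos : ∀ x ∈ l, 0 < x)
    (hd : ∀ x ∈ l, x < d) (hM : M.Nonempty) (hl : PartialSumsAvoid (M.erase (M.max' hM)) l)
    (htotal : l.sum + d ∉ M) :
    ∃ k ≤ l.length, PartialSumsAvoid M (l.insertIdx k d) := by
  have hmono := List.strictMonoOn_sum_take hpos
  have hlow (i : ℕ) (hi1 : 1 ≤ i) (hil : i ≤ l.length) (hne : (l.take i).sum ≠ M.max' hM) :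
      (l.take i).sum ∉ M := fun hmem => hl i hi1 hil (mem_erase.2 ⟨hne, hmem⟩)
  by_cases hhit : ∃ j < l.length, (l.take (j + 1)).sum = M.max' hM
  · obtain ⟨j, hjl, hjμ⟩ := hhit
    refine ⟨j, hjl.le, partialSumsAvoid_insertIdx hjl.le (fun i hi1 hij => hlow i hi1 (by omega)
      (hjμ ▸ (hmono (Set.mem_Iic.2 (by omega)) (Set.mem_Iic.2 hjl) (by omega)).ne))
      fun i hji hil hmem => ?_⟩
    have hjump : (l.take (j + 1)).sum < (l.take j).sum + d := by
      rw [List.sum_take_succ _ _ hjl]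
      exact add_lt_add_right (hd _ (List.getElem_mem hjl)) _
    have hle : (l.take j).sum ≤ (l.take i).sum :=
      hmono.monotoneOn (Set.mem_Iic.2 hjl.le) (Set.mem_Iic.2 hil) hji
    linarith [M.le_max' _ hmem]
  · push Not at hhit
    refine ⟨l.length, le_rfl, partialSumsAvoid_insertIdx le_rfl
      (fun i hi1 hil => hlow i hi1 hil ?_) fun i hi hil => ?_⟩
    · obtain ⟨j, rfl⟩ : ∃ j, i = j + 1 := ⟨i - 1, by omega⟩
      exact hhit j hil
    · rwa [le_antisymm hil hi, List.take_length]

theorem exists_insertIdx_partialSumsAvoid_of_sum_mem (hpos : ∀ x ∈ l, 0 < x)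
    (hd : ∀ x ∈ l, x < d) (hcard : #M ≤ l.length) (hR : l.sum ∈ M)
    (hl : PartialSumsAvoid ((M.erase l.sum).image fun m => if m < l.sum then m else m - d) l)
    (htotal : l.sum + d ∉ M) :
    ∃ k ≤ l.length, PartialSumsAvoid M (l.insertIdx k d) := by
  obtain ⟨n, hn⟩ : ∃ n, l.length = n + 1 :=
    Nat.exists_eq_add_one.2 ((card_pos.2 ⟨_, hR⟩).trans_le hcard)
  have hmono := List.strictMonoOn_sum_take hpos
  have hsum_take : (l.take (n + 1)).sum = l.sum := by rw [← hn, List.take_length]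
  refine ⟨n, by omega, partialSumsAvoid_insertIdx (by omega) (fun i hi1 hin hmem => ?_)
    fun i hni hil hmem => ?_⟩
  · have hlt : (l.take i).sum < l.sum :=
      hsum_take ▸ hmono (Set.mem_Iic.2 (by omega)) (Set.mem_Iic.2 hn.ge) (by omega)
    exact hl i hi1 (by omega) (mem_image.2 ⟨_, mem_erase.2 ⟨hlt.ne, hmem⟩, if_pos hlt⟩)
  obtain rfl | rfl : i = n ∨ i = n + 1 := by omega
  · have hgt : l.sum < (l.take i).sum + d := by
      rw [← hsum_take, List.sum_take_succ _ _ (by omega)]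
      exact add_lt_add_right (hd _ (List.getElem_mem _)) _
    rcases Nat.eq_zero_or_pos i with rfl | hi
    -- The start `0` is not a landing point; there `d` and `l.sum` would be two mines.
    · simp only [List.take_zero, List.sum_nil, zero_add] at hmem hgt
      exact hgt.ne (card_le_one.1 (hcard.trans_eq hn) _ hR _ hmem)
    · refine hl i hi (by omega) (mem_image.2 ⟨_, mem_erase.2 ⟨hgt.ne', hmem⟩, ?_⟩)
      simp [hgt.not_gt]
  · rw [hsum_take] at hmem
    exact htotal hmem

end InsertLargestJump

theorem exists_perm_partialSumsAvoid_insertIdx {A : List ℝ} {d : ℝ} (hpos : ∀ x ∈ A, 0 < x)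
    (hd : ∀ x ∈ A, x < d) {M : Finset ℝ} (hM : #M ≤ A.length) (htotal : A.sum + d ∉ M)
    (ih : ∀ N : Finset ℝ, #N < A.length → A.sum ∉ N →
      ∃ l : List ℝ, l.Perm A ∧ PartialSumsAvoid N l) :
    ∃ l : List ℝ, l.Perm A ∧ ∃ k ≤ l.length, PartialSumsAvoid M (l.insertIdx k d) := by
  rcases M.eq_empty_or_nonempty with rfl | hMne
  · exact ⟨A, List.Perm.refl A, 0, Nat.zero_le _, fun _ _ _ => notMem_empty _⟩
  by_cases hR : A.sum ∈ M
  · have hRN : A.sum ∉ (M.erase A.sum).image fun m => if m < A.sum then m else m - d := by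
      intro hmem
      obtain ⟨m, hm, hfold⟩ := mem_image.1 hmem
      split_ifs at hfold
      · exact ne_of_mem_erase hm hfold
      · exact htotal (by rw [← hfold, sub_add_cancel]; exact mem_of_mem_erase hm)
    obtain ⟨l, hlA, hav⟩ := ih _ (card_image_le.trans_lt <| by
      rw [card_erase_of_mem hR]; have := hMne.card_pos; omega) hRN
    rw [← hlA.sum_eq] at hR htotal hav
    exact ⟨l, hlA, exists_insertIdx_partialSumsAvoid_of_sum_mem
      (fun x hx => hpos x (hlA.subset hx)) (fun x hx => hd x (hlA.subset hx))
      (hlA.length_eq ▸ hM) hR hav htotal⟩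
  · obtain ⟨l, hlA, hav⟩ := ih (M.erase (M.max' hMne))
      (by rw [card_erase_of_mem (M.max'_mem hMne)]; have := hMne.card_pos; omega)
      (fun h => hR (mem_of_mem_erase h))
    rw [← hlA.sum_eq] at htotal
    exact ⟨l, hlA, exists_insertIdx_partialSumsAvoid_of_erase_max
      (fun x hx => hpos x (hlA.subset hx)) (fun x hx => hd x (hlA.subset hx)) hMne hav htotal⟩

theorem exists_perm_partialSumsAvoid (L : List ℝ) (hnd : L.Nodup) (hpos : ∀ x ∈ L, 0 < x)
    (M : Finset ℝ) (hM : #M < L.length) (hsum : L.sum ∉ M) :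
    ∃ L' : List ℝ, L'.Perm L ∧ PartialSumsAvoid M L' := by
  induction hn : L.length generalizing L M with
  | zero => omega
  | succ n ih =>
    obtain ⟨d, hdL, hdmax⟩ := L.toFinset.exists_max_image id
      (List.toFinset_nonempty_iff L |>.2 (List.ne_nil_of_length_eq_add_one hn))
    simp only [List.mem_toFinset, id] at hdL hdmax
    have hLA : L.Perm (d :: L.erase d) := List.perm_cons_erase hdL
    have hA_lt (x : ℝ) (hx : x ∈ L.erase d) : x < d := by
      obtain ⟨hxd, hxL⟩ := hnd.mem_erase_iff.1 hx
      exact (hdmax x hxL).lt_of_ne hxd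
    have hA_len : (L.erase d).length = n := by simpa [hn] using hLA.length_eq.symm
    obtain ⟨l, hlA, k, hk, hav⟩ := exists_perm_partialSumsAvoid_insertIdx
      (fun x hx => hpos x (List.mem_of_mem_erase hx)) hA_lt (M := M) (by omega)
      (by rwa [hLA.sum_eq, List.sum_cons, add_comm] at hsum)
      fun N hN hRN => ih _ (hnd.erase d) (fun x hx => hpos x (List.mem_of_mem_erase hx)) N
        (by omega) hRN hA_len
    exact ⟨_, ((List.perm_insertIdx d l hk).trans (hlA.cons d)).trans hLA.symm, hav⟩

theorem grasshopper_real_general (n : ℕ) (a : Fin n → ℝ)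
    (ha_pos : ∀ i, 0 < a i) (ha_inj : Function.Injective a)
    (M : Finset ℝ) (hM_card : M.card = n - 1)
    (hs : (∑ i, a i) ∉ M) :
    ∃ σ : Equiv.Perm (Fin n), ∀ l : ℕ, 1 ≤ l → l ≤ n →
      (∑ k ∈ Finset.univ.filter (fun k : Fin n => (k : ℕ) < l), a (σ k)) ∉ M := by
  rcases Nat.eq_zero_or_pos n with rfl | hn
  · exact ⟨1, fun l hl1 hl => by omega⟩
  obtain ⟨L, hL, hav⟩ := exists_perm_partialSumsAvoid (List.ofFn a) (List.nodup_ofFn.2 ha_inj)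
    (by simpa using ha_pos) M (by simp; omega) (by rwa [List.sum_ofFn])
  obtain ⟨σ, rfl⟩ := hL.exists_ofFn_comp_eq ha_inj
  refine ⟨σ, fun l hl1 hl => ?_⟩
  rw [← List.sum_take_ofFn]
  exact hav l hl1 (by simpa using hl)

/-- The grasshopper problem for distinct positive real jump lengths: for
distinct positive reals `a 0, …, a (n-1)` and a set `M` of `n - 1` positive
reals not containing `s = ∑ i, a i`, there is an order of the jumps such
that no partial sum lands in `M`. -/
theorem grasshopper_real (n : ℕ) (hn : 1 ≤ n) (a : Fin n → ℝ)
    (ha_pos : ∀ i, 0 < a i) (ha_inj : Function.Injective a)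
    (M : Finset ℝ) (hM_card : M.card = n - 1) (hM_pos : ∀ m ∈ M, 0 < m)
    (hs : (∑ i, a i) ∉ M) :
    ∃ σ : Equiv.Perm (Fin n), ∀ l : ℕ, 1 ≤ l → l ≤ n →
      (∑ k ∈ Finset.univ.filter (fun k : Fin n => (k : ℕ) < l), a (σ k)) ∉ M :=
  grasshopper_real_general n a ha_pos ha_inj M hM_card hs
end

section
/- Let a₁, a₂, a₃ be distinct positive integers and let m₁, m₂ be distinct positive integers. Then there exists a permutation π of {1, 2, 3} such that (a_{π(1)} − m₁)(a_{π(1)} − m₂)(a_{π(1)} + a_{π(2)} − m₁)(a_{π(1)} + a_{π(2)} − m₂) ≠ 0. -/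
lemma grasshopper_key (x y z m₁ m₂ : ℤ) (hx : 0 < x) (hy : 0 < y) (hz : 0 < z)
    (hxy : x ≠ y) (hxz : x ≠ z) (hyz : y ≠ z)
    (hm₁ : 0 < m₁) (hm₂ : 0 < m₂) (hm : m₁ ≠ m₂) :
    (x ≠ m₁ ∧ x ≠ m₂ ∧ x + y ≠ m₁ ∧ x + y ≠ m₂) ∨
    (x ≠ m₁ ∧ x ≠ m₂ ∧ x + z ≠ m₁ ∧ x + z ≠ m₂) ∨
    (y ≠ m₁ ∧ y ≠ m₂ ∧ y + x ≠ m₁ ∧ y + x ≠ m₂) ∨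
    (y ≠ m₁ ∧ y ≠ m₂ ∧ y + z ≠ m₁ ∧ y + z ≠ m₂) ∨
    (z ≠ m₁ ∧ z ≠ m₂ ∧ z + x ≠ m₁ ∧ z + x ≠ m₂) ∨
    (z ≠ m₁ ∧ z ≠ m₂ ∧ z + y ≠ m₁ ∧ z + y ≠ m₂) := by
  omega

/-- Theorem 1 of the paper: for distinct positive integers `a 0, a 1, a 2`
and distinct positive integers `m₁, m₂`, some permutation `π` of `{0,1,2}`
makes the grasshopper polynomial nonzero. -/
theorem theorem1 (a : Fin 3 → ℤ) (ha_pos : ∀ i, 0 < a i)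
    (ha_inj : Function.Injective a)
    (m₁ m₂ : ℤ) (hm₁ : 0 < m₁) (hm₂ : 0 < m₂) (hm : m₁ ≠ m₂) :
    ∃ π : Equiv.Perm (Fin 3),
      (a (π 0) - m₁) * (a (π 0) - m₂) * (a (π 0) + a (π 1) - m₁) *
        (a (π 0) + a (π 1) - m₂) ≠ 0 := by
  have h01 : a 0 ≠ a 1 := fun h => by simpa using ha_inj h
  have h02 : a 0 ≠ a 2 := fun h => by simpa using ha_inj h
  have h12 : a 1 ≠ a 2 := fun h => by simpa using ha_inj h
  have key := grasshopper_key (a 0) (a 1) (a 2) m₁ m₂ (ha_pos 0) (ha_pos 1)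
    (ha_pos 2) h01 h02 h12 hm₁ hm₂ hm
  rcases key with ⟨h1, h2, h3, h4⟩ | ⟨h1, h2, h3, h4⟩ | ⟨h1, h2, h3, h4⟩ |
    ⟨h1, h2, h3, h4⟩ | ⟨h1, h2, h3, h4⟩ | ⟨h1, h2, h3, h4⟩
  · exact ⟨Equiv.refl _, by
      simp only [Equiv.refl_apply]
      intro h
      rcases mul_eq_zero.1 h with h | h
      · rcases mul_eq_zero.1 h with h | h
        · rcases mul_eq_zero.1 h with h | h
          · exact h1 (by linarith)
          · exact h2 (by linarith)
        · exact h3 (by linarith)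
      · exact h4 (by linarith)⟩
  · refine ⟨Equiv.swap 1 2, ?_⟩
    have e0 : (Equiv.swap (1 : Fin 3) 2) 0 = 0 := by decide
    have e1 : (Equiv.swap (1 : Fin 3) 2) 1 = 2 := by decide
    rw [e0, e1]
    intro h
    rcases mul_eq_zero.1 h with h | h
    · rcases mul_eq_zero.1 h with h | h
      · rcases mul_eq_zero.1 h with h | h
        · exact h1 (by linarith)
        · exact h2 (by linarith)
      · exact h3 (by linarith)
    · exact h4 (by linarith)
  · refine ⟨Equiv.swap 0 1, ?_⟩
    have e0 : (Equiv.swap (0 : Fin 3) 1) 0 = 1 := by decide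
    have e1 : (Equiv.swap (0 : Fin 3) 1) 1 = 0 := by decide
    rw [e0, e1]
    intro h
    rcases mul_eq_zero.1 h with h | h
    · rcases mul_eq_zero.1 h with h | h
      · rcases mul_eq_zero.1 h with h | h
        · exact h1 (by linarith)
        · exact h2 (by linarith)
      · exact h3 (by linarith)
    · exact h4 (by linarith)
  · refine ⟨finRotate 3, ?_⟩
    have e0 : (finRotate 3) 0 = 1 := by decide
    have e1 : (finRotate 3) 1 = 2 := by decide
    rw [e0, e1]
    intro h
    rcases mul_eq_zero.1 h with h | h
    · rcases mul_eq_zero.1 h with h | h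
      · rcases mul_eq_zero.1 h with h | h
        · exact h1 (by linarith)
        · exact h2 (by linarith)
      · exact h3 (by linarith)
    · exact h4 (by linarith)
  · refine ⟨(finRotate 3)⁻¹, ?_⟩
    have e0 : (finRotate 3)⁻¹ (0 : Fin 3) = 2 := by decide
    have e1 : (finRotate 3)⁻¹ (1 : Fin 3) = 0 := by decide
    rw [e0, e1]
    intro h
    rcases mul_eq_zero.1 h with h | h
    · rcases mul_eq_zero.1 h with h | h
      · rcases mul_eq_zero.1 h with h | h
        · exact h1 (by linarith)
        · exact h2 (by linarith)
      · exact h3 (by linarith)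
    · exact h4 (by linarith)
  · refine ⟨Equiv.swap 0 2, ?_⟩
    have e0 : (Equiv.swap (0 : Fin 3) 2) 0 = 2 := by decide
    have e1 : (Equiv.swap (0 : Fin 3) 2) 1 = 1 := by decide
    rw [e0, e1]
    intro h
    rcases mul_eq_zero.1 h with h | h
    · rcases mul_eq_zero.1 h with h | h
      · rcases mul_eq_zero.1 h with h | h
        · exact h1 (by linarith)
        · exact h2 (by linarith)
      · exact h3 (by linarith)
    · exact h4 (by linarith)
end

section
/- Let n ≥ 1, let a₁ < a₂ < ⋯ < aₙ be positive integers, and let m₁, m₂, …, m_{n−1} be distinct positive integers with m_i ≠ a₁ + ⋯ + aₙ for all i. Assume further that the sums of elements over the nonempty subsets of {a₁, …, aₙ} are pairwise distinct, i.e., for any two distinct subsets {r₁, …, r_t} and {s₁, …, s_u} of {a₁, …, aₙ} one has r₁ + ⋯ + r_t ≠ s₁ + ⋯ + s_u. Then there exists a permutation σ of {1, …, n} such that for every l with 1 ≤ l ≤ n, the partial sum a_{σ(1)} + ⋯ + a_{σ(l)} is different from every m_i. -/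
/-!
An order of the jumps is blocked by a mine `x` when the jumps of some nonempty prefix sum to `x`.
Since subset sums are distinct, all orders blocked by `x` have the same prefix set `S`, and
`1 ≤ #S ≤ n - 1` because `x` is not the total sum. So each mine blocks at most
`(#S)! (n - #S)! ≤ (n - 1)!` orders, and the `n - 1` mines together block fewer than `n!`.
-/

open Finset Equiv Nat

theorem Nat.factorial_succ_mul_factorial_succ_le (i j : ℕ) :
    (i + 1)! * (j + 1)! ≤ (i + j + 1)! := by
  induction j with
  | zero => simp
  | succ j ih =>
    calc (i + 1)! * (j + 2)! = (j + 2) * ((i + 1)! * (j + 1)!) := by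
          rw [Nat.factorial_succ (j + 1)]; ring
      _ ≤ (i + j + 2) * (i + j + 1)! := by gcongr; omega
      _ = (i + (j + 1) + 1)! := (Nat.factorial_succ _).symm

theorem Nat.pred_mul_factorial_pred_lt_factorial (n : ℕ) : (n - 1) * (n - 1)! < n ! := by
  cases n with
  | zero => simp
  | succ n =>
    rw [Nat.add_sub_cancel, Nat.factorial_succ]
    exact Nat.mul_lt_mul_of_pos_right (Nat.lt_succ_self n) (Nat.factorial_pos n)

theorem Finset.exists_forall_notMem_of_sum_card_lt {ι β : Type*} [Fintype β] (s : Finset ι)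
    (B : ι → Finset β) (h : ∑ i ∈ s, #(B i) < Fintype.card β) : ∃ b, ∀ i ∈ s, b ∉ B i := by
  classical
  by_contra! hcover
  have : (univ : Finset β) ⊆ s.biUnion B := fun b _ => by simpa using hcover b
  have := (card_le_card this).trans card_biUnion_le
  rw [card_univ] at this
  omega

section PermMap

variable {α : Type*} [Fintype α] [DecidableEq α]

theorem Equiv.Perm.card_filter_map_eq_le {K S : Finset α} (hKS : #K = #S) :
    #{σ : Perm α | K.map σ.toEmbedding = S} ≤ (#K)! * (Fintype.card α - #K)! := by
  have hmem (σ : {σ : Perm α // K.map σ.toEmbedding = S}) (x : α) : σ.1 x ∈ S ↔ x ∈ K := by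
    obtain ⟨σ, rfl⟩ := σ
    simp
  let restrict (σ : {σ : Perm α // K.map σ.toEmbedding = S}) :
      (K ↪ S) × ((Kᶜ : Finset α) ↪ (Sᶜ : Finset α)) :=
    (⟨fun x => ⟨σ.1 x, (hmem σ x).2 x.2⟩,
      fun x y h => Subtype.ext (σ.1.injective (by simpa using h))⟩,
     ⟨fun x => ⟨σ.1 x, mem_compl.2 fun h => mem_compl.1 x.2 ((hmem σ x).1 h)⟩,
      fun x y h => Subtype.ext (σ.1.injective (by simpa using h))⟩)
  have hrestrict : Function.Injective restrict := by
    intro σ τ h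
    ext x
    by_cases hx : x ∈ K
    · exact congrArg Subtype.val (DFunLike.congr_fun (congrArg Prod.fst h) ⟨x, hx⟩)
    · exact congrArg Subtype.val (DFunLike.congr_fun (congrArg Prod.snd h) ⟨x, mem_compl.2 hx⟩)
  have := Fintype.card_le_of_injective restrict hrestrict
  rw [Fintype.card_subtype] at this
  simpa [Fintype.card_embedding_eq, card_compl, hKS, Nat.descFactorial_self] using this

end PermMap

section PrefixSums

variable {n : ℕ}

def prefixSet (σ : Perm (Fin n)) (l : ℕ) : Finset (Fin n) :=
  ({k : Fin n | (k : ℕ) < l} : Finset (Fin n)).map σ.toEmbedding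

theorem sum_prefixSet {M : Type*} [AddCommMonoid M] (a : Fin n → M) (σ : Perm (Fin n)) (l : ℕ) :
    ∑ j ∈ prefixSet σ l, a j = ∑ k ∈ {k : Fin n | (k : ℕ) < l}, a (σ k) :=
  sum_map _ _ _

theorem card_prefixSet (σ : Perm (Fin n)) {l : ℕ} (hl : l ≤ n) : #(prefixSet σ l) = l := by
  simp [prefixSet, Fin.card_filter_val_lt, hl]

theorem card_filter_prefixSet_eq_le {S : Finset (Fin n)} (hS : S.Nonempty) (hSu : S ≠ univ) :
    #{σ : Perm (Fin n) | prefixSet σ #S = S} ≤ (n - 1)! := by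
  have hpos : 0 < #S := hS.card_pos
  have hlt : #S < n := by simpa using card_lt_card (ssubset_univ_iff.2 hSu)
  have hK : #{k : Fin n | (k : ℕ) < #S} = #S := by simp [Fin.card_filter_val_lt, hlt.le]
  obtain ⟨i, hi⟩ : ∃ i, #S = i + 1 := ⟨#S - 1, by omega⟩
  obtain ⟨j, hj⟩ : ∃ j, n - #S = j + 1 := ⟨n - #S - 1, by omega⟩
  calc _ ≤ (#S)! * (n - #S)! := by
        have := Perm.card_filter_map_eq_le hK
        rwa [hK, Fintype.card_fin] at this
    _ ≤ (n - 1)! := by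
      rw [hj, hi, show n - 1 = i + j + 1 by omega]
      exact Nat.factorial_succ_mul_factorial_succ_le i j

theorem card_filter_exists_prefix_sum_eq_le {M : Type*} [AddCommMonoid M] [DecidableEq M]
    {a : Fin n → M} (ha : Set.InjOn (fun S : Finset (Fin n) => ∑ i ∈ S, a i) {S | S.Nonempty})
    {x : M} (hx : x ≠ ∑ i, a i) :
    #{σ : Perm (Fin n) | ∃ l ∈ Icc (1 : ℕ) n, ∑ k ∈ {k : Fin n | (k : ℕ) < l}, a (σ k) = x}
      ≤ (n - 1)! := by
  rcases eq_empty_or_nonempty ({σ : Perm (Fin n) |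
    ∃ l ∈ Icc (1 : ℕ) n, ∑ k ∈ {k : Fin n | (k : ℕ) < l}, a (σ k) = x} : Finset _)
    with hempty | ⟨σ₀, hσ₀⟩
  · simp [hempty]
  obtain ⟨l₀, hl₀, hsum₀⟩ := (mem_filter.1 hσ₀).2
  have hne (σ : Perm (Fin n)) (l : ℕ) (hl : l ∈ Icc 1 n) : (prefixSet σ l).Nonempty := by
    rw [mem_Icc] at hl
    exact card_pos.1 (by rw [card_prefixSet σ hl.2]; omega)
  have hprefix (σ : Perm (Fin n)) (l : ℕ) (hl : l ∈ Icc 1 n)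
      (hsum : ∑ k ∈ {k : Fin n | (k : ℕ) < l}, a (σ k) = x) :
      prefixSet σ l = prefixSet σ₀ l₀ :=
    ha (hne σ l hl) (hne σ₀ l₀ hl₀) (by simp only [sum_prefixSet, hsum, hsum₀])
  have hSu : prefixSet σ₀ l₀ ≠ univ := by
    intro hSu
    apply hx
    rw [← hsum₀, ← sum_prefixSet, hSu]
  calc _ ≤ #{σ : Perm (Fin n) | prefixSet σ #(prefixSet σ₀ l₀) = prefixSet σ₀ l₀} := by
        refine card_le_card fun σ hσ => ?_
        obtain ⟨l, hl, hsum⟩ := (mem_filter.1 hσ).2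
        simp [← hprefix σ l hl hsum, card_prefixSet σ (mem_Icc.1 hl).2]
    _ ≤ (n - 1)! := card_filter_prefixSet_eq_le (hne σ₀ l₀ hl₀) hSu

end PrefixSums

theorem theorem2_general (n : ℕ) (a : Fin n → ℤ)
    (hsums : ∀ S T : Finset (Fin n), S.Nonempty → T.Nonempty → S ≠ T →
      (∑ i ∈ S, a i) ≠ (∑ i ∈ T, a i))
    (m : Fin (n - 1) → ℤ) (hm_ne : ∀ i, m i ≠ ∑ i, a i) :
    ∃ σ : Equiv.Perm (Fin n), ∀ l : ℕ, 1 ≤ l → l ≤ n → ∀ i : Fin (n - 1),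
      (∑ k ∈ Finset.univ.filter (fun k : Fin n => (k : ℕ) < l), a (σ k)) ≠ m i := by
  have ha : Set.InjOn (fun S : Finset (Fin n) => ∑ i ∈ S, a i) {S | S.Nonempty} :=
    fun S hS T hT hST => by_contra fun hne => hsums S T hS hT hne hST
  obtain ⟨σ, hσ⟩ := exists_forall_notMem_of_sum_card_lt univ (fun i : Fin (n - 1) =>
    {σ : Perm (Fin n) | ∃ l ∈ Icc (1 : ℕ) n, ∑ k ∈ {k : Fin n | (k : ℕ) < l}, a (σ k) = m i}) <|
    calc _ ≤ ∑ _i : Fin (n - 1), (n - 1)! :=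
          sum_le_sum fun i _ => card_filter_exists_prefix_sum_eq_le ha (hm_ne i)
      _ = (n - 1) * (n - 1)! := by simp
      _ < n ! := Nat.pred_mul_factorial_pred_lt_factorial n
      _ = Fintype.card (Perm (Fin n)) := by rw [Fintype.card_perm, Fintype.card_fin]
  refine ⟨σ, fun l hl1 hln i hsum => hσ i (mem_univ i) ?_⟩
  exact mem_filter.2 ⟨mem_univ σ, l, mem_Icc.2 ⟨hl1, hln⟩, hsum⟩

/-- Theorem 2 of the paper: if the positive integers `a 0 < a 1 < ⋯ < a (n-1)`
have pairwise distinct nonempty-subset sums, and `m 0, …, m (n-2)` are distinct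
positive integers, none equal to `∑ i, a i`, then some order of the jumps has
all its partial sums different from every `m i`. -/
theorem theorem2 (n : ℕ) (hn : 1 ≤ n) (a : Fin n → ℤ)
    (ha_pos : ∀ i, 0 < a i) (ha_mono : StrictMono a)
    (hsums : ∀ S T : Finset (Fin n), S.Nonempty → T.Nonempty → S ≠ T →
      (∑ i ∈ S, a i) ≠ (∑ i ∈ T, a i))
    (m : Fin (n - 1) → ℤ) (hm_pos : ∀ i, 0 < m i) (hm_inj : Function.Injective m)
    (hm_ne : ∀ i, m i ≠ ∑ i, a i) :
    ∃ σ : Equiv.Perm (Fin n), ∀ l : ℕ, 1 ≤ l → l ≤ n → ∀ i : Fin (n - 1),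
      (∑ k ∈ Finset.univ.filter (fun k : Fin n => (k : ℕ) < l), a (σ k)) ≠ m i :=
  theorem2_general n a hsums m hm_ne
end

section
/- Let n ≥ 1, let a₁ < a₂ < ⋯ < aₙ be positive integers whose nonempty subsets have pairwise distinct element sums, and let m₁, …, m_{n−1} be distinct positive integers. Then the number of permutations σ of {1, …, n} for which some partial sum a_{σ(1)} + ⋯ + a_{σ(l)} with 1 ≤ l ≤ n−1 equals some m_i is at most (n−1)!·(n−1); consequently at least (n−1)! permutations σ have the property that all partial sums a_{σ(1)} + ⋯ + a_{σ(l)}, 1 ≤ l ≤ n−1, avoid {m₁, …, m_{n−1}}. -/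
/-!
If `σ` and `τ` both hit the value `c` with a partial sum, then, because distinct subsets have
distinct sums, the two prefixes have the same length `l` and are mapped onto the same set `S`.
So the permutations hitting `c` all lie in one left coset of the stabilizer of `{0, …, l-1}`,
which has `l! (n-l)! ≤ (n-1)!` elements. A union bound over the `n - 1` values `m i` finishes.
-/

open Finset Equiv Nat

theorem Equiv.Perm.card_stabilizer_finset {α : Type*} [Fintype α] [DecidableEq α]
    (s : Finset α) :
    #{σ : Perm α | ∀ x, σ x ∈ s ↔ x ∈ s} = (#s)! * (Fintype.card α - #s)! := by
  have h := DomMulAct.stabilizer_card (fun x : α => decide (x ∈ s))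
  simp only [Fintype.prod_bool, decide_eq_true_eq, decide_eq_false_iff_not,
    Fintype.card_subtype_compl, Fintype.card_coe, funext_iff, Function.comp_apply,
    decide_eq_decide] at h
  rw [← h, Fintype.card_subtype]

theorem Equiv.Perm.card_map_eq_le {α : Type*} [Fintype α] [DecidableEq α] (s t : Finset α) :
    #{σ : Perm α | s.map σ.toEmbedding = t} ≤ (#s)! * (Fintype.card α - #s)! := by
  rcases eq_empty_or_nonempty {σ : Perm α | s.map σ.toEmbedding = t} with h | ⟨σ₀, hσ₀⟩
  · simp [h]
  rw [← Perm.card_stabilizer_finset]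
  refine card_le_card_of_injOn (σ₀⁻¹ * ·) (fun σ hσ => ?_) (mul_right_injective _).injOn
  simp only [coe_filter, mem_filter, mem_univ, true_and, Set.mem_ofPred_eq] at hσ hσ₀ ⊢
  intro x
  rw [Perm.mul_apply, Perm.inv_def, ← mem_map_equiv, hσ₀, ← hσ, mem_map_equiv, symm_apply_apply]

theorem Nat.factorial_mul_factorial_sub_le_factorial_pred {n l : ℕ} (hl : 0 < l) (hln : l < n) :
    l ! * (n - l)! ≤ (n - 1)! := by
  obtain ⟨i, rfl⟩ : ∃ i, l = i + 1 := ⟨l - 1, by omega⟩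
  obtain ⟨j, rfl⟩ : ∃ j, n = i + j + 2 := ⟨n - i - 2, by omega⟩
  rw [show i + j + 2 - (i + 1) = j + 1 by omega, show i + j + 2 - 1 = i + j + 1 by omega]
  clear hl hln
  induction j with
  | zero => simp
  | succ j ih =>
    calc (i + 1)! * (j + 1 + 1)! = (j + 2) * ((i + 1)! * (j + 1)!) := by
          rw [Nat.factorial_succ (j + 1)]; ring
      _ ≤ (i + j + 2) * (i + j + 1)! := by gcongr; omega
      _ = (i + (j + 1) + 1)! := by rw [← Nat.factorial_succ]; rfl

abbrev initialSegment (n l : ℕ) : Finset (Fin n) := {k | (k : ℕ) < l}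

theorem card_initialSegment {n l : ℕ} (hl : l ≤ n) : #(initialSegment n l) = l := by
  rw [Fin.card_filter_val_lt, min_eq_right hl]

section DistinctSubsetSums

variable {M : Type*} [AddCommMonoid M] {n : ℕ} {a : Fin n → M}

theorem eq_and_map_initialSegment_eq_of_sum_eq
    (ha : ∀ S T : Finset (Fin n), S.Nonempty → T.Nonempty → S ≠ T →
      ∑ i ∈ S, a i ≠ ∑ i ∈ T, a i)
    {σ τ : Perm (Fin n)} {l l' : ℕ} (hl : 0 < l) (hln : l ≤ n) (hl' : 0 < l') (hl'n : l' ≤ n)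
    (h : ∑ k ∈ initialSegment n l, a (σ k) = ∑ k ∈ initialSegment n l', a (τ k)) :
    l = l' ∧
      (initialSegment n l).map σ.toEmbedding = (initialSegment n l').map τ.toEmbedding := by
  have card_map_initialSegment (ρ : Perm (Fin n)) {k : ℕ} (hk : k ≤ n) :
      #((initialSegment n k).map ρ.toEmbedding) = k := by
    rw [card_map, card_initialSegment hk]
  have hmap : (initialSegment n l).map σ.toEmbedding =
      (initialSegment n l').map τ.toEmbedding := by
    by_contra hne
    refine ha _ _ (card_pos.1 ?_) (card_pos.1 ?_) hne (by rwa [sum_map, sum_map])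
    · rwa [card_map_initialSegment σ hln]
    · rwa [card_map_initialSegment τ hl'n]
  refine ⟨?_, hmap⟩
  simpa only [card_map_initialSegment σ hln, card_map_initialSegment τ hl'n] using
    congrArg card hmap

theorem ncard_perm_partialSum_eq_le
    (ha : ∀ S T : Finset (Fin n), S.Nonempty → T.Nonempty → S ≠ T →
      ∑ i ∈ S, a i ≠ ∑ i ∈ T, a i) (c : M) :
    {σ : Perm (Fin n) |
        ∃ l, 1 ≤ l ∧ l ≤ n - 1 ∧ ∑ k ∈ initialSegment n l, a (σ k) = c}.ncard ≤
      (n - 1)! := by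
  set F := {σ : Perm (Fin n) | ∃ l, 1 ≤ l ∧ l ≤ n - 1 ∧ ∑ k ∈ initialSegment n l, a (σ k) = c}
  rcases F.eq_empty_or_nonempty with h | ⟨σ₀, l₀, hl₀, hl₀n, hsum₀⟩
  · simp [h]
  have hsub : F ⊆ ↑({σ : Perm (Fin n) | (initialSegment n l₀).map σ.toEmbedding =
      (initialSegment n l₀).map σ₀.toEmbedding} : Finset (Perm (Fin n))) := by
    rintro σ ⟨l, hl, hln, hsum⟩
    obtain ⟨rfl, hmap⟩ := eq_and_map_initialSegment_eq_of_sum_eq ha (by omega) (by omega)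
      (by omega) (by omega) (hsum.trans hsum₀.symm)
    simpa using hmap
  calc F.ncard ≤ _ := Set.ncard_le_ncard hsub
    _ ≤ l₀ ! * (n - l₀)! := by
      rw [Set.ncard_coe_finset]
      exact (Perm.card_map_eq_le _ _).trans_eq <| by
        rw [card_initialSegment (by omega), Fintype.card_fin]
    _ ≤ (n - 1)! := Nat.factorial_mul_factorial_sub_le_factorial_pred (by omega) (by omega)

end DistinctSubsetSums

theorem Nat.factorial_pred_mul_pred_add_factorial_pred_le (n : ℕ) :
    (n - 1)! * (n - 1) + (n - 1)! ≤ n ! := by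
  rcases n with _ | n
  · rfl
  · rw [Nat.add_sub_cancel, Nat.factorial_succ]
    exact le_of_eq (by ring)

theorem theorem2_count_general (n : ℕ) (a : Fin n → ℤ)
    (hsums : ∀ S T : Finset (Fin n), S.Nonempty → T.Nonempty → S ≠ T →
      (∑ i ∈ S, a i) ≠ (∑ i ∈ T, a i))
    (m : Fin (n - 1) → ℤ) :
    Nat.card {σ : Equiv.Perm (Fin n) //
        ∃ l : ℕ, 1 ≤ l ∧ l ≤ n - 1 ∧ ∃ i : Fin (n - 1),
          (∑ k ∈ Finset.univ.filter (fun k : Fin n => (k : ℕ) < l), a (σ k)) = m i}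
      ≤ Nat.factorial (n - 1) * (n - 1) ∧
    Nat.factorial (n - 1) ≤
      Nat.card {σ : Equiv.Perm (Fin n) //
        ∀ l : ℕ, 1 ≤ l → l ≤ n - 1 → ∀ i : Fin (n - 1),
          (∑ k ∈ Finset.univ.filter (fun k : Fin n => (k : ℕ) < l), a (σ k)) ≠ m i} := by
  set B : Set (Perm (Fin n)) := {σ | ∃ l : ℕ, 1 ≤ l ∧ l ≤ n - 1 ∧ ∃ i : Fin (n - 1),
    ∑ k ∈ initialSegment n l, a (σ k) = m i}
  have hblocked : B.ncard ≤ (n - 1)! * (n - 1) := calc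
    B.ncard ≤ (⋃ i, {σ : Perm (Fin n) | ∃ l, 1 ≤ l ∧ l ≤ n - 1 ∧
        ∑ k ∈ initialSegment n l, a (σ k) = m i}).ncard :=
      Set.ncard_le_ncard fun σ ⟨l, hl, hln, i, h⟩ => Set.mem_iUnion.2 ⟨i, l, hl, hln, h⟩
    _ ≤ ∑ _i : Fin (n - 1), (n - 1)! := (Set.ncard_iUnion_le_of_fintype _).trans <|
      sum_le_sum fun i _ => ncard_perm_partialSum_eq_le hsums (m i)
    _ = (n - 1)! * (n - 1) := by simp [mul_comm]
  have hsplit : B.ncard + Bᶜ.ncard = n ! := by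
    rw [Set.ncard_add_ncard_compl, Nat.card_perm, Nat.card_eq_fintype_card, Fintype.card_fin]
  refine ⟨hblocked, ?_⟩
  calc (n - 1)! ≤ Bᶜ.ncard := by
        have := Nat.factorial_pred_mul_pred_add_factorial_pred_le n
        omega
    _ = _ := Nat.card_congr (Equiv.subtypeEquivRight fun σ => by simp [B])

/-- The counting claim in the proof of Theorem 2 of the paper: if the positive
integers `a 0 < ⋯ < a (n-1)` have pairwise distinct nonempty-subset sums and
`m 0, …, m (n-2)` are distinct positive integers, then at most `(n-1)!·(n-1)`
permutations have some partial sum (of length `1 ≤ l ≤ n-1`) equal to some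
`m i`, and consequently at least `(n-1)!` permutations avoid all the `m i`. -/
theorem theorem2_count (n : ℕ) (hn : 1 ≤ n) (a : Fin n → ℤ)
    (ha_pos : ∀ i, 0 < a i) (ha_mono : StrictMono a)
    (hsums : ∀ S T : Finset (Fin n), S.Nonempty → T.Nonempty → S ≠ T →
      (∑ i ∈ S, a i) ≠ (∑ i ∈ T, a i))
    (m : Fin (n - 1) → ℤ) (hm_pos : ∀ i, 0 < m i) (hm_inj : Function.Injective m) :
    Nat.card {σ : Equiv.Perm (Fin n) //
        ∃ l : ℕ, 1 ≤ l ∧ l ≤ n - 1 ∧ ∃ i : Fin (n - 1),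
          (∑ k ∈ Finset.univ.filter (fun k : Fin n => (k : ℕ) < l), a (σ k)) = m i}
      ≤ Nat.factorial (n - 1) * (n - 1) ∧
    Nat.factorial (n - 1) ≤
      Nat.card {σ : Equiv.Perm (Fin n) //
        ∀ l : ℕ, 1 ≤ l → l ≤ n - 1 → ∀ i : Fin (n - 1),
          (∑ k ∈ Finset.univ.filter (fun k : Fin n => (k : ℕ) < l), a (σ k)) ≠ m i} :=
  theorem2_count_general n a hsums m
end
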